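/- arXiv:2305.16933 — 4 statements merged into one kernel-verified Lean document; each statement's English description precedes it below -/
import Mathlib

section
/- Let n ≥ 1 and let R be a finite set of affine functions from ℝⁿ to ℝ with |R| ≥ n + 2. Then there exists a decomposition of R into two non-empty disjoint subsets S and T (R = S ⊎ T) such that for every point x ∈ ℝⁿ one has max_{g∈T} g(x) ≥ min_{g∈S} g(x). -/
open RealInnerProductSpace
open scoped Classical

/-- An affine function `ℝⁿ → ℝ`: `x ↦ ⟪a, x⟫ + b`. -/
def IsAffineFn {n : ℕ} (g : EuclideanSpace ℝ (Fin n) → ℝ) : Prop :=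
  ∃ (a : EuclideanSpace ℝ (Fin n)) (b : ℝ), ∀ x, g x = ⟪a, x⟫ + b

lemma aux0 {n : ℕ} (R : Finset (EuclideanSpace ℝ (Fin n) → ℝ))
    (a : (EuclideanSpace ℝ (Fin n) → ℝ) → EuclideanSpace ℝ (Fin n))
    (b : (EuclideanSpace ℝ (Fin n) → ℝ) → ℝ)
    (hab : ∀ g ∈ R, ∀ x, g x = ⟪a g, x⟫ + b g)
    (c : (EuclideanSpace ℝ (Fin n) → ℝ) → ℝ)
    (h1 : ∑ g ∈ R, c g • a g = 0)
    (h2 : ∑ g ∈ R, c g = 0)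
    (h3 : ∃ g ∈ R, c g ≠ 0)
    (h4 : 0 ≤ ∑ g ∈ R, c g * b g) :
    ∃ S T : Finset (EuclideanSpace ℝ (Fin n) → ℝ),
      ∃ (hS : S.Nonempty) (hT : T.Nonempty),
        Disjoint S T ∧ S ∪ T = R ∧
        ∀ x : EuclideanSpace ℝ (Fin n),
          S.inf' hS (fun g => g x) ≤ T.sup' hT (fun g => g x) := by
  set T := R.filter (fun g => 0 < c g) with hTdef
  set S := R.filter (fun g => ¬ 0 < c g) with hSdef
  have hTmem : ∀ g ∈ T, 0 < c g := fun g hg => (Finset.mem_filter.mp hg).2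
  have hSmem : ∀ g ∈ S, c g ≤ 0 := fun g hg => not_lt.mp (Finset.mem_filter.mp hg).2
  have hTne : T.Nonempty := by
    by_contra h
    obtain ⟨g0, hg0, hc0⟩ := h3
    have hall : ∀ g ∈ R, 0 ≤ -c g := by
      intro g hg
      have hng : ¬ 0 < c g := fun hpos => h ⟨g, Finset.mem_filter.mpr ⟨hg, hpos⟩⟩
      linarith [not_lt.mp hng]
    have hsum : ∑ g ∈ R, -c g = 0 := by
      rw [Finset.sum_neg_distrib, h2, neg_zero]
    have := (Finset.sum_eq_zero_iff_of_nonneg hall).mp hsum g0 hg0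
    exact hc0 (by linarith)
  have hSne : S.Nonempty := by
    by_contra h
    obtain ⟨g0, hg0, hc0⟩ := h3
    have hall : ∀ g ∈ R, 0 ≤ c g := by
      intro g hg
      by_contra hneg
      have hng : ¬ 0 < c g := by linarith [lt_of_not_ge hneg]
      exact h ⟨g, Finset.mem_filter.mpr ⟨hg, hng⟩⟩
    exact hc0 ((Finset.sum_eq_zero_iff_of_nonneg hall).mp h2 g0 hg0)
  refine ⟨S, T, hSne, hTne, ?_, ?_, ?_⟩
  · exact (Finset.disjoint_filter_filter_not R R _).symm
  · rw [hSdef, hTdef, Finset.union_comm]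
    exact Finset.filter_union_filter_not_eq _ R
  · intro x
    have key : ∑ g ∈ R, c g * g x = ∑ g ∈ R, c g * b g := by
      have h5 : ∑ g ∈ R, c g * g x = ∑ g ∈ R, (c g * ⟪a g, x⟫ + c g * b g) := by
        refine Finset.sum_congr rfl fun g hg => ?_
        rw [hab g hg x, mul_add]
      rw [h5, Finset.sum_add_distrib]
      have h6 : ∑ g ∈ R, c g * ⟪a g, x⟫ = ⟪∑ g ∈ R, c g • a g, x⟫ := by
        rw [sum_inner]
        exact Finset.sum_congr rfl fun g _ => (real_inner_smul_left (a g) x (c g)).symm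
      rw [h6, h1, inner_zero_left, zero_add]
    set W := ∑ g ∈ T, c g with hW
    have hWpos : 0 < W := Finset.sum_pos hTmem hTne
    have hsplitc : ∑ g ∈ T, c g + ∑ g ∈ S, c g = ∑ g ∈ R, c g :=
      Finset.sum_filter_add_sum_filter_not R _ _
    have hsplitx : ∑ g ∈ T, c g * g x + ∑ g ∈ S, c g * g x = ∑ g ∈ R, c g * g x :=
      Finset.sum_filter_add_sum_filter_not R _ _
    have hTle : ∑ g ∈ T, c g * g x ≤ W * T.sup' hTne (fun g => g x) := by
      rw [hW, Finset.sum_mul]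
      refine Finset.sum_le_sum fun g hg => ?_
      exact mul_le_mul_of_nonneg_left (Finset.le_sup' (fun g => g x) hg) (hTmem g hg).le
    have hSle : ∑ g ∈ S, c g * g x ≤ (∑ g ∈ S, c g) * S.inf' hSne (fun g => g x) := by
      rw [Finset.sum_mul]
      refine Finset.sum_le_sum fun g hg => ?_
      exact mul_le_mul_of_nonpos_left (Finset.inf'_le (fun g => g x) hg) (hSmem g hg)
    have hScw : ∑ g ∈ S, c g = -W := by
      have := hsplitc
      rw [h2] at this
      linarith
    rw [hScw] at hSle
    have hfinal : W * S.inf' hSne (fun g => g x) ≤ W * T.sup' hTne (fun g => g x) := by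
      nlinarith [key, hsplitx, hTle, hSle, h4]
    exact le_of_mul_le_mul_left hfinal hWpos

theorem stmt0 (n : ℕ) (hn : 1 ≤ n)
    (R : Finset (EuclideanSpace ℝ (Fin n) → ℝ))
    (hRaff : ∀ g ∈ R, IsAffineFn g)
    (hcard : n + 2 ≤ R.card) :
    ∃ S T : Finset (EuclideanSpace ℝ (Fin n) → ℝ),
      ∃ (hS : S.Nonempty) (hT : T.Nonempty),
        Disjoint S T ∧ S ∪ T = R ∧
        ∀ x : EuclideanSpace ℝ (Fin n),
          S.inf' hS (fun g => g x) ≤ T.sup' hT (fun g => g x) := by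
  classical
  have hch : ∀ g : (EuclideanSpace ℝ (Fin n) → ℝ),
      ∃ (a : EuclideanSpace ℝ (Fin n)) (b : ℝ), g ∈ R → ∀ x, g x = ⟪a, x⟫ + b := by
    intro g
    by_cases hg : g ∈ R
    · obtain ⟨a, b, hab⟩ := hRaff g hg
      exact ⟨a, b, fun _ => hab⟩
    · exact ⟨0, 0, fun h => absurd h hg⟩
  choose a b hab using hch
  set v : {g // g ∈ R} → (EuclideanSpace ℝ (Fin n)) × ℝ := fun g => (a g.1, 1) with hv
  have hnli : ¬ LinearIndependent ℝ v := by
    intro hli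
    have hle := hli.fintype_card_le_finrank
    rw [Fintype.card_coe] at hle
    have hfr : Module.finrank ℝ ((EuclideanSpace ℝ (Fin n)) × ℝ) = n + 1 := by
      rw [Module.finrank_prod, finrank_euclideanSpace_fin, Module.finrank_self]
    omega
  obtain ⟨c0, hc0, i0, hi0⟩ := Fintype.not_linearIndependent_iff.mp hnli
  set c : (EuclideanSpace ℝ (Fin n) → ℝ) → ℝ :=
    fun g => if h : g ∈ R then c0 ⟨g, h⟩ else 0 with hc
  have hceq : ∀ g : {g // g ∈ R}, c g.1 = c0 g := by
    intro g
    simp only [hc, dif_pos g.2]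
  have hA' : ∑ g : {g // g ∈ R}, c0 g • a g.1 = 0 := by
    have h := congrArg Prod.fst hc0
    simpa [hv, Prod.fst_sum] using h
  have hB' : ∑ g : {g // g ∈ R}, c0 g = 0 := by
    have h := congrArg Prod.snd hc0
    simpa [hv, Prod.snd_sum, smul_eq_mul] using h
  have hA : ∑ g ∈ R, c g • a g = 0 := by
    rw [← Finset.sum_coe_sort R (fun g => c g • a g), ← hA']
    exact Finset.sum_congr rfl fun g _ => by rw [hceq g]
  have hB : ∑ g ∈ R, c g = 0 := by
    rw [← Finset.sum_coe_sort R (fun g => c g), ← hB']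
    exact Finset.sum_congr rfl fun g _ => hceq g
  have hC : ∃ g ∈ R, c g ≠ 0 := ⟨i0.1, i0.2, by rw [hceq i0]; exact hi0⟩
  rcases le_or_gt 0 (∑ g ∈ R, c g * b g) with h4 | h4
  · exact aux0 R a b (fun g hg x => hab g hg x) c hA hB hC h4
  · refine aux0 R a b (fun g hg x => hab g hg x) (fun g => -c g) ?_ ?_ ?_ ?_
    · simp only [neg_smul]
      rw [Finset.sum_neg_distrib, hA, neg_zero]
    · simpa using hB
    · obtain ⟨g, hg, hne⟩ := hC
      exact ⟨g, hg, by simpa using hne⟩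
    · have : ∑ g ∈ R, -(c g * b g) = -∑ g ∈ R, c g * b g := by
        simp
      simp only [neg_mul]
      rw [this]
      linarith
end

section
/- Let S and T be finite non-empty disjoint sets of affine functions from ℝⁿ to ℝ such that for all x ∈ ℝⁿ, max_{g∈T} g(x) ≥ min_{g∈S} g(x). Then for all x ∈ ℝⁿ, the alternating sum over all subsets M of S satisfies ∑_{M ⊆ S} (−1)^{|M|} · max_{g ∈ M ∪ T} g(x) = 0. -/
open RealInnerProductSpace
open scoped Classical

theorem stmt1 (n : ℕ)
    (S T : Finset (EuclideanSpace ℝ (Fin n) → ℝ))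
    (hS : S.Nonempty) (hT : T.Nonempty) (hdisj : Disjoint S T)
    (hSaff : ∀ g ∈ S, IsAffineFn g) (hTaff : ∀ g ∈ T, IsAffineFn g)
    (hST : ∀ x : EuclideanSpace ℝ (Fin n),
      S.inf' hS (fun g => g x) ≤ T.sup' hT (fun g => g x)) :
    ∀ x : EuclideanSpace ℝ (Fin n),
      ∑ M ∈ S.powerset,
        (-1 : ℝ) ^ M.card *
          (M ∪ T).sup' (hT.mono Finset.subset_union_right) (fun g => g x) = 0 := by
  intro x
  obtain ⟨g0, hg0S, hg0⟩ := Finset.exists_mem_eq_inf' hS (fun g => g x)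
  have hle : g0 x ≤ T.sup' hT (fun g => g x) := by rw [← hg0]; exact hST x
  have key : ∀ M : Finset (EuclideanSpace ℝ (Fin n) → ℝ),
      ((insert g0 M) ∪ T).sup' (hT.mono Finset.subset_union_right) (fun g => g x)
        = (M ∪ T).sup' (hT.mono Finset.subset_union_right) (fun g => g x) := by
    intro M
    have hTle : T.sup' hT (fun g => g x)
        ≤ (M ∪ T).sup' (hT.mono Finset.subset_union_right) (fun g => g x) :=
      Finset.sup'_le hT _ fun g hg =>
        Finset.le_sup' (fun h => h x) (Finset.mem_union_right M hg)
    apply le_antisymm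
    · apply Finset.sup'_le
      intro g hg
      rcases Finset.mem_union.1 hg with hg | hg
      · rcases Finset.mem_insert.1 hg with rfl | hg
        · exact hle.trans hTle
        · exact Finset.le_sup' (fun h => h x) (Finset.mem_union_left T hg)
      · exact Finset.le_sup' (fun h => h x) (Finset.mem_union_right M hg)
    · apply Finset.sup'_le
      intro g hg
      exact Finset.le_sup' (fun h => h x)
        (Finset.union_subset_union_left (Finset.subset_insert g0 M) hg)
  nth_rewrite 1 [← Finset.insert_erase hg0S]
  rw [Finset.sum_powerset_insert (Finset.notMem_erase g0 S), ← Finset.sum_add_distrib]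
  apply Finset.sum_eq_zero
  intro M hM
  have hMe : g0 ∉ M := fun h => Finset.notMem_erase g0 S (Finset.mem_powerset.1 hM h)
  rw [key M, Finset.card_insert_of_notMem hMe, pow_succ]
  ring
end

section
/- Let n ≥ 1 and let R be a finite set of affine functions from ℝⁿ to ℝ with |R| ≥ n + 2. Then the function x ↦ max_{g∈R} g(x) is equal to an integer linear combination of functions of the form x ↦ max_{g∈R'} g(x), where each R' is a non-empty proper subset of R. That is, there exist finitely many non-empty proper subsets R'_1, …, R'_m of R and integers c_1, …, c_m such that for all x ∈ ℝⁿ, max_{g∈R} g(x) = ∑_{i=1}^m c_i · max_{g∈R'_i} g(x). -/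
open RealInnerProductSpace
open scoped Classical

lemma alt_sum {α : Type*} [DecidableEq α] (v : α → ℝ) (I J : Finset α) (hI : I.Nonempty)
    (j0 : α) (hj0 : j0 ∈ J) (hle : v j0 ≤ I.sup' hI v) :
    ∑ T ∈ J.powerset, (-1:ℝ)^T.card * (I ∪ T).sup' (hI.mono Finset.subset_union_left) v = 0 := by
  have hins : J = insert j0 (J.erase j0) := (Finset.insert_erase hj0).symm
  rw [hins, Finset.sum_powerset_insert (Finset.notMem_erase _ _), ← Finset.sum_add_distrib]
  apply Finset.sum_eq_zero
  intro T hT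
  have hj0T : j0 ∉ T := by
    intro h
    exact Finset.notMem_erase j0 J (Finset.mem_powerset.mp hT h)
  have hcard : (insert j0 T).card = T.card + 1 := Finset.card_insert_of_notMem hj0T
  have hset : I ∪ insert j0 T = insert j0 (I ∪ T) := Finset.union_insert j0 I T
  have hsup : (I ∪ insert j0 T).sup' (hI.mono Finset.subset_union_left) v
      = (I ∪ T).sup' (hI.mono Finset.subset_union_left) v := by
    rw [Finset.sup'_congr _ hset (fun x _ => rfl)]
    rw [Finset.sup'_insert]
    exact sup_eq_right.mpr (le_trans hle
      (Finset.sup'_mono v (Finset.subset_union_left : I ⊆ I ∪ T) hI))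
  rw [hsup, hcard, pow_succ]
  ring


theorem stmt2 (n : ℕ) (hn : 1 ≤ n)
    (R : Finset (EuclideanSpace ℝ (Fin n) → ℝ))
    (hRaff : ∀ g ∈ R, IsAffineFn g)
    (hcard : n + 2 ≤ R.card) :
    ∃ (m : ℕ) (R' : Fin m → Finset (EuclideanSpace ℝ (Fin n) → ℝ))
      (c : Fin m → ℤ),
      ∃ h : ∀ i, (R' i).Nonempty ∧ R' i ⊂ R,
        ∀ x : EuclideanSpace ℝ (Fin n),
          R.sup' (Finset.card_pos.mp (by omega)) (fun g => g x) =
            ∑ i, (c i : ℝ) * (R' i).sup' (h i).1 (fun g => g x) := by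
  classical
  have haff : ∀ g : {x // x ∈ R}, ∃ a : EuclideanSpace ℝ (Fin n), ∃ b : ℝ,
      ∀ x, (g : EuclideanSpace ℝ (Fin n) → ℝ) x = ⟪a, x⟫ + b := fun g => hRaff g g.2
  choose a b hab using haff
  -- linear dependence of the lifted gradients
  have hdep : ¬ LinearIndependent ℝ
      (fun g : {x // x ∈ R} => ((a g, 1) : EuclideanSpace ℝ (Fin n) × ℝ)) := by
    intro h
    have h1 := h.fintype_card_le_finrank
    rw [Fintype.card_coe] at h1
    have hfr : Module.finrank ℝ (EuclideanSpace ℝ (Fin n) × ℝ) = n + 1 := by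
      rw [Module.finrank_prod, finrank_euclideanSpace_fin, Module.finrank_self]
    omega
  obtain ⟨lam, hlam0, g0, hg0⟩ := Fintype.not_linearIndependent_iff.mp hdep
  have hA : ∑ g : {x // x ∈ R}, lam g • a g = 0 := by
    have := congrArg Prod.fst hlam0
    simpa [Prod.fst_sum] using this
  have hS : ∑ g : {x // x ∈ R}, lam g = 0 := by
    have := congrArg Prod.snd hlam0
    simpa [Prod.snd_sum] using this
  set C : ℝ := ∑ g : {x // x ∈ R}, lam g * b g with hCdef
  set s : ℝ := if 0 ≤ C then 1 else -1 with hsdef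
  have hs1 : s = 1 ∨ s = -1 := by unfold s; split <;> simp
  have hsC : 0 ≤ s * C := by
    unfold s; split
    · simpa using ‹0 ≤ C›
    · rw [neg_one_mul]; linarith [lt_of_not_ge ‹¬ 0 ≤ C›]
  set mu : (EuclideanSpace ℝ (Fin n) → ℝ) → ℝ :=
    fun g => if h : g ∈ R then s * lam ⟨g, h⟩ else 0 with hmudef
  have hmu_coe : ∀ g : {x // x ∈ R}, mu ↑g = s * lam g := by
    intro g; simp [hmudef, g.2]
  have hmusum : ∑ g ∈ R, mu g = 0 := by
    rw [← Finset.sum_coe_sort R mu]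
    simp only [hmu_coe]
    rw [← Finset.mul_sum, hS, mul_zero]
  have hCkey : ∀ x, ∑ g ∈ R, mu g * g x = s * C := by
    intro x
    rw [← Finset.sum_coe_sort R (fun g => mu g * g x)]
    have : ∀ g : {x // x ∈ R}, mu ↑g * (g : EuclideanSpace ℝ (Fin n) → ℝ) x
        = s * (lam g * ⟪a g, x⟫ + lam g * b g) := by
      intro g
      rw [hmu_coe, hab g x]
      ring
    rw [Finset.sum_congr rfl (fun g _ => this g)]
    rw [← Finset.mul_sum, Finset.sum_add_distrib]
    have hinz : ∑ g : {x // x ∈ R}, lam g * ⟪a g, x⟫ = 0 := by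
      have : ∀ g : {x // x ∈ R}, lam g * ⟪a g, x⟫ = ⟪lam g • a g, x⟫ := by
        intro g; rw [real_inner_smul_left]
      rw [Finset.sum_congr rfl (fun g _ => this g), ← sum_inner, hA, inner_zero_left]
    rw [hinz, zero_add, hCdef]
  -- mu is nonzero somewhere, positive and negative parts
  have hmug0 : mu ↑g0 ≠ 0 := by
    rw [hmu_coe]
    rcases hs1 with h | h <;> rw [h] <;> simpa using hg0
  have hexneg : ∃ g ∈ R, ¬ 0 ≤ mu g := by
    by_contra hcon
    push_neg at hcon
    have := (Finset.sum_eq_zero_iff_of_nonneg hcon).mp hmusum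
    exact hmug0 (this ↑g0 g0.2)
  have hexpos : ∃ g ∈ R, 0 < mu g := by
    by_contra hcon
    push_neg at hcon
    have hcon' : ∀ g ∈ R, mu g ≤ 0 := hcon
    have := (Finset.sum_eq_zero_iff_of_nonpos hcon').mp hmusum
    exact hmug0 (this ↑g0 g0.2)
  set I : Finset (EuclideanSpace ℝ (Fin n) → ℝ) := R.filter (fun g => 0 ≤ mu g) with hIdef
  set J : Finset (EuclideanSpace ℝ (Fin n) → ℝ) := R.filter (fun g => ¬ 0 ≤ mu g) with hJdef
  have hIJ : I ∪ J = R := Finset.filter_union_filter_not_eq _ R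
  have hIne : I.Nonempty := by
    obtain ⟨g, hg, hpos⟩ := hexpos
    exact ⟨g, Finset.mem_filter.mpr ⟨hg, le_of_lt hpos⟩⟩
  have hJne : J.Nonempty := by
    obtain ⟨g, hg, hneg⟩ := hexneg
    exact ⟨g, Finset.mem_filter.mpr ⟨hg, hneg⟩⟩
  have hkey : ∀ x, ∃ j0 ∈ J, j0 x ≤ I.sup' hIne (fun g => g x) := by
    intro x
    by_contra hcon
    push_neg at hcon
    set M : ℝ := I.sup' hIne (fun g => g x) with hMdef
    have hsplit : ∑ g ∈ I, mu g * g x + ∑ g ∈ J, mu g * g x = s * C := by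
      rw [hIdef, hJdef, Finset.sum_filter_add_sum_filter_not R _ (fun g => mu g * g x), hCkey]
    have hI_le : ∑ g ∈ I, mu g * g x ≤ ∑ g ∈ I, mu g * M := by
      apply Finset.sum_le_sum
      intro g hg
      have h1 : 0 ≤ mu g := (Finset.mem_filter.mp hg).2
      have h2 : g x ≤ M := Finset.le_sup' (fun g => g x) hg
      exact mul_le_mul_of_nonneg_left h2 h1
    have hJ_lt : ∑ g ∈ J, mu g * g x < ∑ g ∈ J, mu g * M := by
      apply Finset.sum_lt_sum_of_nonempty hJne
      intro g hg
      have h1 : mu g < 0 := lt_of_not_ge (Finset.mem_filter.mp hg).2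
      have h2 : M < g x := hcon g hg
      exact (mul_lt_mul_left_of_neg h1).mpr h2
    have hsum0 : ∑ g ∈ I, mu g * M + ∑ g ∈ J, mu g * M = 0 := by
      rw [← Finset.sum_mul, ← Finset.sum_mul, ← add_mul]
      rw [hIdef, hJdef, Finset.sum_filter_add_sum_filter_not R _ mu, hmusum, zero_mul]
    linarith
  -- the indexing
  set S : Finset (Finset (EuclideanSpace ℝ (Fin n) → ℝ)) := J.powerset.erase J with hSdef
  set m : ℕ := S.card with hmdef
  set e : {T // T ∈ S} ≃ Fin m := S.equivFin with hedef
  have hSmem : ∀ T ∈ S, T ⊆ J ∧ T ≠ J := by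
    intro T hT
    rw [hSdef, Finset.mem_erase, Finset.mem_powerset] at hT
    exact ⟨hT.2, hT.1⟩
  refine ⟨m, fun i => I ∪ (e.symm i).1, fun i => (-1)^((e.symm i).1.card + J.card + 1), ?_, ?_⟩
  · intro i
    obtain ⟨hTJ, hTne⟩ := hSmem _ (e.symm i).2
    constructor
    · exact hIne.mono Finset.subset_union_left
    · constructor
      · apply Finset.union_subset (Finset.filter_subset _ R)
        exact subset_trans hTJ (Finset.filter_subset _ R)
      · intro hsub
        obtain ⟨j, hjJ, hjT⟩ := Finset.exists_of_ssubset (Finset.ssubset_iff_subset_ne.mpr ⟨hTJ, hTne⟩)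
        have hjR : j ∈ R := Finset.filter_subset _ R hjJ
        have hjI : j ∉ I := by
          rw [hIdef, Finset.mem_filter]
          intro hmem
          exact (Finset.mem_filter.mp hjJ).2 hmem.2
        have := hsub hjR
        rw [Finset.mem_union] at this
        tauto
  · intro x
    obtain ⟨j0, hj0, hle⟩ := hkey x
    have halt := alt_sum (fun g => g x) I J hIne j0 hj0 hle
    -- split off T = J
    have hJS : J ∈ J.powerset := Finset.mem_powerset_self J
    rw [← Finset.add_sum_erase _ _ hJS] at halt
    -- main sup rewrite
    have hsupR : R.sup' (Finset.card_pos.mp (by omega)) (fun g => g x)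
        = (I ∪ J).sup' (hIne.mono Finset.subset_union_left) (fun g => g x) :=
      (Finset.sup'_congr _ hIJ (fun _ _ => rfl)).symm
    rw [hsupR]
    -- transfer sum over Fin m to sum over S
    have htrans : ∑ i : Fin m, (((-1:ℝ)^((e.symm i).1.card + J.card + 1))
          * (I ∪ (e.symm i).1).sup' (hIne.mono Finset.subset_union_left) (fun g => g x))
        = ∑ T ∈ S, ((-1:ℝ)^(T.card + J.card + 1)
          * (I ∪ T).sup' (hIne.mono Finset.subset_union_left) (fun g => g x)) := by
      rw [← Finset.sum_coe_sort S (fun T => ((-1:ℝ)^(T.card + J.card + 1)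
          * (I ∪ T).sup' (hIne.mono Finset.subset_union_left) (fun g => g x)))]
      rw [← Equiv.sum_comp e.symm (fun T : {T // T ∈ S} => ((-1:ℝ)^((T.1).card + J.card + 1)
          * (I ∪ T.1).sup' (hIne.mono Finset.subset_union_left) (fun g => g x)))]
    push_cast
    rw [htrans]
    have hfac : ∀ T : Finset (EuclideanSpace ℝ (Fin n) → ℝ),
        (-1:ℝ)^(T.card + J.card + 1) = (-1)^(J.card + 1) * (-1)^T.card := by
      intro T; rw [← pow_add]; ring_nf
    rw [Finset.sum_congr rfl (fun T _ => by rw [hfac T, mul_assoc]), ← Finset.mul_sum]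
    have hsq : ((-1:ℝ)^J.card) * ((-1:ℝ)^J.card) = 1 := by
      rw [← pow_add]
      exact Even.neg_one_pow ⟨J.card, rfl⟩
    have hS' : ∑ T ∈ J.powerset.erase J, ((-1:ℝ)^T.card
        * (I ∪ T).sup' (hIne.mono Finset.subset_union_left) (fun g => g x))
        = -((-1:ℝ)^J.card * (I ∪ J).sup' (hIne.mono Finset.subset_union_left) (fun g => g x)) := by
      linarith [halt]
    rw [hSdef, hS', pow_succ]
    linear_combination
      (-((I ∪ J).sup' (hIne.mono Finset.subset_union_left) fun g => g x)) * hsq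
end

section
/- Minkowski addition of polytopes is cancellable: if A, B, C are polytopes in ℝⁿ and A + C = B + C (as Minkowski sums of sets), then A = B. -/
open Pointwise

/-- A polytope in `ℝⁿ`: the convex hull of a non-empty finite set of points. -/
def IsPolytope {n : ℕ} (P : Set (EuclideanSpace ℝ (Fin n))) : Prop :=
  ∃ s : Finset (EuclideanSpace ℝ (Fin n)),
    s.Nonempty ∧ P = convexHull ℝ (s : Set (EuclideanSpace ℝ (Fin n)))

/-! A point `x ∉ B` is strictly separated from the closed convex set `B` by a continuous
functional `f`. Adding to `x` a point of `C` where `f` is maximal gives a point of `A + C`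
whose `f`-value exceeds that of every point of `B + C`. -/

section Cancellation

variable {E : Type*} [TopologicalSpace E] [AddCommGroup E] [Module ℝ E]
  [IsTopologicalAddGroup E] [ContinuousSMul ℝ E] [LocallyConvexSpace ℝ E]

theorem Convex.subset_of_add_subset_add_right {A B C : Set E} (hB : Convex ℝ B)
    (hBc : IsClosed B) (hC : IsCompact C) (hCne : C.Nonempty) (h : A + C ⊆ B + C) :
    A ⊆ B := by
  intro x hx
  by_contra hxB
  obtain ⟨f, u, hfB, hux⟩ := geometric_hahn_banach_closed_point hB hBc hxB
  obtain ⟨c, hc, hc_max⟩ := hC.exists_isMaxOn hCne f.continuous.continuousOn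
  obtain ⟨b, hb, c', hc', hbc⟩ := h (Set.add_mem_add hx hc)
  have hf : f b + f c' = f x + f c := by
    rw [← map_add, ← map_add]
    exact congrArg f hbc
  have hfc' : f c' ≤ f c := hc_max hc'
  linarith [hfB b hb]

theorem Convex.eq_of_add_eq_add_right {A B C : Set E} (hA : Convex ℝ A) (hB : Convex ℝ B)
    (hAc : IsClosed A) (hBc : IsClosed B) (hC : IsCompact C) (hCne : C.Nonempty)
    (h : A + C = B + C) : A = B :=
  (hB.subset_of_add_subset_add_right hBc hC hCne h.le).antisymm
    (hA.subset_of_add_subset_add_right hAc hC hCne h.ge)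

end Cancellation

namespace IsPolytope

variable {n : ℕ} {P : Set (EuclideanSpace ℝ (Fin n))}

theorem convex (hP : IsPolytope P) : Convex ℝ P := by
  obtain ⟨s, -, rfl⟩ := hP
  exact convex_convexHull ℝ _

theorem isCompact (hP : IsPolytope P) : IsCompact P := by
  obtain ⟨s, -, rfl⟩ := hP
  exact s.finite_toSet.isCompact_convexHull ℝ

theorem nonempty (hP : IsPolytope P) : P.Nonempty := by
  obtain ⟨s, hs, rfl⟩ := hP
  exact hs.to_set.mono (subset_convexHull ℝ _)

end IsPolytope

theorem stmt7 (n : ℕ) (A B C : Set (EuclideanSpace ℝ (Fin n)))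
    (hA : IsPolytope A) (hB : IsPolytope B) (hC : IsPolytope C)
    (h : A + C = B + C) : A = B :=
  hA.convex.eq_of_add_eq_add_right hB.convex hA.isCompact.isClosed hB.isCompact.isClosed
    hC.isCompact hC.nonempty h
end
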